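/- Let ρ_AB be a separable bipartite state on ℂ^{d_A} ⊗ ℂ^{d_B}, let a ∈ ℝ^m and b ∈ ℝ^n be arbitrary vectors, let {M^A_α}_{α=1}^{d_A²} be a GSIC-POVM on ℂ^{d_A} with parameter a_A and {M^B_β}_{β=1}^{d_B²} a GSIC-POVM on ℂ^{d_B} with parameter a_B. Then ‖Q_{a,b}(ρ_AB)‖_tr ≤ √((|a|² + (a_A d_A² + 1)/(d_A(d_A+1)))·(|b|² + (a_B d_B² + 1)/(d_B(d_B+1)))). -/

import Mathlib

open scoped BigOperators ComplexOrder
open Matrix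

noncomputable def traceNorm {m n : Type*} [Fintype m] [Fintype n] [DecidableEq n]
    (X : Matrix m n ℂ) : ℝ :=
  (((Matrix.posSemidef_conjTranspose_mul_self X).1.eigenvectorUnitary : Matrix n n ℂ) *
    diagonal (((↑) : ℝ → ℂ) ∘ (√·) ∘ (Matrix.posSemidef_conjTranspose_mul_self X).1.eigenvalues) *
    (star (Matrix.posSemidef_conjTranspose_mul_self X).1.eigenvectorUnitary :
      Matrix n n ℂ)).trace.re

def IsDensityMatrix {ι : Type*} [Fintype ι] (ρ : Matrix ι ι ℂ) : Prop :=
  ρ.PosSemidef ∧ ρ.trace = 1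

def IsNMPOVM (d N M : ℕ) (x : ℝ)
    (E : Fin N → Fin M → Matrix (Fin d) (Fin d) ℂ) : Prop :=
  (∀ α k, (E α k).PosSemidef) ∧
  (∀ α, ∑ k, E α k = 1) ∧
  (∀ α k, (E α k).trace = (((d : ℝ) / M : ℝ) : ℂ)) ∧
  (∀ α k, (E α k * E α k).trace = (x : ℂ)) ∧
  (∀ α k l, k ≠ l → (E α k * E α l).trace =
      ((((d : ℝ) - M * x) / (M * ((M : ℝ) - 1)) : ℝ) : ℂ)) ∧
  (∀ α β k l, α ≠ β → (E α k * E β l).trace = (((d : ℝ) / M ^ 2 : ℝ) : ℂ)) ∧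
  ((d : ℝ) / M ^ 2 < x ∧ x ≤ min ((d : ℝ) ^ 2 / M ^ 2) ((d : ℝ) / M))

def IsInfoComplete (d N M : ℕ) : Prop := ((M : ℝ) - 1) * N = (d : ℝ) ^ 2 - 1
open Kronecker

/-- Partial trace over the second factor. -/
noncomputable def ptraceB {dA dB : ℕ} (ρ : Matrix (Fin dA × Fin dB) (Fin dA × Fin dB) ℂ) :
    Matrix (Fin dA) (Fin dA) ℂ :=
  Matrix.of fun i j => ∑ k, ρ (i, k) (j, k)

/-- Partial trace over the first factor. -/
noncomputable def ptraceA {dA dB : ℕ} (ρ : Matrix (Fin dA × Fin dB) (Fin dA × Fin dB) ℂ) :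
    Matrix (Fin dB) (Fin dB) ℂ :=
  Matrix.of fun i j => ∑ k, ρ (k, i) (k, j)

/-- A bipartite state is separable if it is a finite convex combination of
tensor products of local density matrices. -/
def SeparableState {dA dB : ℕ} (ρ : Matrix (Fin dA × Fin dB) (Fin dA × Fin dB) ℂ) : Prop :=
  ∃ (K : ℕ) (p : Fin K → ℝ) (ρA : Fin K → Matrix (Fin dA) (Fin dA) ℂ)
    (ρB : Fin K → Matrix (Fin dB) (Fin dB) ℂ),
    (∀ i, 0 ≤ p i) ∧ (∑ i, p i = 1) ∧
    (∀ i, IsDensityMatrix (ρA i)) ∧ (∀ i, IsDensityMatrix (ρB i)) ∧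
    ρ = ∑ i, (p i : ℂ) • (ρA i ⊗ₖ ρB i)
/-- A general symmetric informationally complete POVM (GSIC-POVM) on ℂ^d with
parameter a. -/
def IsGSICPOVM (d : ℕ) (a : ℝ) (Ms : Fin (d ^ 2) → Matrix (Fin d) (Fin d) ℂ) : Prop :=
  (∀ α, (Ms α).PosSemidef) ∧ (∑ α, Ms α = 1) ∧
  (∀ α, (Ms α * Ms α).trace = (a : ℂ)) ∧
  (∀ α β, α ≠ β → (Ms α * Ms β).trace =
      (((1 - (d : ℝ) * a) / ((d : ℝ) * ((d : ℝ) ^ 2 - 1)) : ℝ) : ℂ)) ∧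
  (1 / (d : ℝ) ^ 3 < a ∧ a ≤ 1 / (d : ℝ) ^ 2)

/-
For a separable state ρ = ∑ₖ pₖ ρₖᴬ ⊗ ρₖᴮ the matrix Q_{a,b}(ρ) is the mixture ∑ₖ pₖ uₖ vₖᵀ of
rank-one matrices with uₖ = (a, ςₖ), vₖ = (b, ζₖ) built from the local states; that is, Q = AᴴB
where A and B have rows √pₖ uₖ and √pₖ vₖ. Writing ‖X‖_tr = Re tr(Z X) with Z a partial isometry,
Cauchy–Schwarz for the Frobenius inner product gives ‖AᴴB‖_tr ≤ ‖A‖_F ‖B‖_F, and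
‖A‖_F² = ∑ₖ pₖ (|a|² + ∑_α tr(M_α ρₖᴬ)²). For a GSIC-POVM with parameter a and off-diagonal
overlap c the Gram matrix is (a - c) I + c J, which yields
∑_α tr(M_α ρ)² = (a - c) tr ρ² + c d ≤ (a d² + 1)/(d(d + 1)), using tr ρ² ≤ 1.
-/

namespace Matrix

variable {n k p q : Type*} [Fintype n] [Fintype k] [Fintype p] [Fintype q]

theorem IsHermitian.star_trace_mul {A B : Matrix n n ℂ} (hA : A.IsHermitian)
    (hB : B.IsHermitian) : star (A * B).trace = (A * B).trace := by
  rw [← trace_conjTranspose, conjTranspose_mul, hA.eq, hB.eq, trace_mul_comm]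

theorem trace_conjStarAlgAut [DecidableEq n] (U : unitary (Matrix n n ℂ)) (A : Matrix n n ℂ) :
    (Unitary.conjStarAlgAut ℂ _ U A).trace = A.trace := by
  rw [Unitary.conjStarAlgAut_apply, trace_mul_cycle, Unitary.coe_star_mul_self, Matrix.one_mul]

theorem inner_toLp_vec (A B : Matrix k p ℂ) :
    inner ℂ (WithLp.toLp 2 A.vec) (WithLp.toLp 2 B.vec) = (Aᴴ * B).trace := by
  rw [EuclideanSpace.inner_toLp_toLp, dotProduct_comm, star_vec_dotProduct_vec]

theorem re_trace_conjTranspose_mul_le (A B : Matrix k p ℂ) :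
    (Aᴴ * B).trace.re ≤ √(Aᴴ * A).trace.re * √(Bᴴ * B).trace.re := by
  simpa only [norm_eq_sqrt_re_inner (𝕜 := ℂ), inner_toLp_vec, RCLike.re_to_complex] using
    re_inner_le_norm (𝕜 := ℂ) (WithLp.toLp 2 A.vec) (WithLp.toLp 2 B.vec)

theorem re_trace_conjTranspose_mul_self_nonneg (A : Matrix k p ℂ) : 0 ≤ (Aᴴ * A).trace.re :=
  (Complex.nonneg_iff.mp (posSemidef_conjTranspose_mul_self A).trace_nonneg).1

theorem re_trace_conjTranspose_mul_self (A : Matrix k p ℂ) :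
    (Aᴴ * A).trace.re = ∑ i, ∑ j, ‖A i j‖ ^ 2 := by
  simp only [trace, diag, mul_apply, conjTranspose_apply, Complex.re_sum, Complex.star_def,
    Complex.conj_mul', ← Complex.ofReal_pow, Complex.ofReal_re]
  exact Finset.sum_comm

theorem trace_conjTranspose_mul_self_mul_of_isStarProjection {P : Matrix p p ℂ}
    (hP : IsStarProjection P) (A : Matrix k p ℂ) :
    (Aᴴ * A * P).trace = ((A * P)ᴴ * (A * P)).trace := by
  rw [conjTranspose_mul, ← star_eq_conjTranspose P, hP.isSelfAdjoint.star_eq,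
    ← hP.isIdempotentElem.eq, ← mul_assoc, trace_mul_cycle, hP.isIdempotentElem.eq]
  simp only [Matrix.mul_assoc]

theorem re_trace_conjTranspose_mul_self_mul_le [DecidableEq p] {P : Matrix p p ℂ}
    (hP : IsStarProjection P) (A : Matrix k p ℂ) :
    (Aᴴ * A * P).trace.re ≤ (Aᴴ * A).trace.re := by
  have hsplit : (Aᴴ * A).trace = (Aᴴ * A * P).trace + (Aᴴ * A * (1 - P)).trace := by
    rw [← trace_add, ← mul_add, add_sub_cancel, mul_one]
  rw [hsplit, Complex.add_re, le_add_iff_nonneg_right,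
    trace_conjTranspose_mul_self_mul_of_isStarProjection hP.one_sub]
  exact re_trace_conjTranspose_mul_self_nonneg _

/-- The witness is `Z = (XᴴX)^(-1/2) Xᴴ`, the inverse square root inverting only the nonzero
eigenvalues (which `0⁻¹ = 0` does for free); then `Z X = |X|` and `ZᴴZ` projects onto the range
of `X`. -/
theorem exists_isStarProjection_traceNorm_eq [DecidableEq q] (X : Matrix p q ℂ) :
    ∃ Z : Matrix q p ℂ, IsStarProjection (Zᴴ * Z) ∧ traceNorm X = (Z * X).trace.re := by
  set hH := (posSemidef_conjTranspose_mul_self X).1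
  set Φ := Unitary.conjStarAlgAut ℂ (Matrix q q ℂ) hH.eigenvectorUnitary
  set σ : q → ℂ := fun i => (√(hH.eigenvalues i) : ℂ)
  have hXX : Xᴴ * X = Φ (diagonal (σ * σ)) := by
    conv_lhs => rw [hH.spectral_theorem]
    congr 2
    ext i
    simp [σ, ← Complex.ofReal_mul,
      Real.mul_self_sqrt ((posSemidef_conjTranspose_mul_self X).eigenvalues_nonneg i)]
  have hΦ (u v : q → ℂ) : Φ (diagonal u) * Φ (diagonal v) = Φ (diagonal (u * v)) := by
    rw [← map_mul, diagonal_mul_diagonal]; rfl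
  set C := Φ (diagonal σ⁻¹)
  have hC : Cᴴ = C := by
    rw [← star_eq_conjTranspose, ← map_star, star_eq_conjTranspose, diagonal_conjTranspose]
    congr 2
    ext i
    simp [σ, Complex.conj_ofReal]
  have hZZ : (C * Xᴴ)ᴴ * (C * Xᴴ) = X * (C * C) * Xᴴ := by
    rw [conjTranspose_mul, conjTranspose_conjTranspose, hC]
    simp only [Matrix.mul_assoc]
  refine ⟨C * Xᴴ, ⟨?_, ?_⟩, ?_⟩
  · have hCC : C * C * (Xᴴ * X) * (C * C) = C * C := by
      simp only [C, hXX, hΦ]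
      congr 2
      ext i
      by_cases h : σ i = 0
      · simp [h]
      · simp only [Pi.mul_apply, Pi.inv_apply]
        field_simp
    rw [IsIdempotentElem, hZZ]
    calc X * (C * C) * Xᴴ * (X * (C * C) * Xᴴ) = X * (C * C * (Xᴴ * X) * (C * C)) * Xᴴ := by
          simp only [Matrix.mul_assoc]
      _ = X * (C * C) * Xᴴ := by rw [hCC]
  · rw [IsSelfAdjoint, hZZ, star_eq_conjTranspose]
    simp only [conjTranspose_mul, conjTranspose_conjTranspose, hC, Matrix.mul_assoc]
  · have hσ : C * Xᴴ * X = Φ (diagonal σ) := by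
      rw [Matrix.mul_assoc, hXX, hΦ]
      congr 2
      ext i
      simp only [Pi.mul_apply, Pi.inv_apply, ← mul_assoc, inv_mul_mul_self]
    rw [hσ]
    rfl

theorem traceNorm_conjTranspose_mul_le [DecidableEq p] [DecidableEq q]
    (A : Matrix k p ℂ) (B : Matrix k q ℂ) :
    traceNorm (Aᴴ * B) ≤ √(Aᴴ * A).trace.re * √(Bᴴ * B).trace.re := by
  obtain ⟨Z, hZ, hnorm⟩ := exists_isStarProjection_traceNorm_eq (Aᴴ * B)
  have hAZ : ((A * Zᴴ)ᴴ * (A * Zᴴ)).trace = (Aᴴ * A * (Zᴴ * Z)).trace := by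
    rw [conjTranspose_mul, conjTranspose_conjTranspose, ← Matrix.mul_assoc, Matrix.mul_assoc Z,
      trace_mul_cycle, trace_mul_comm]
  calc traceNorm (Aᴴ * B) = ((A * Zᴴ)ᴴ * B).trace.re := by
        rw [hnorm, conjTranspose_mul, conjTranspose_conjTranspose, Matrix.mul_assoc]
    _ ≤ √((A * Zᴴ)ᴴ * (A * Zᴴ)).trace.re * √(Bᴴ * B).trace.re :=
        re_trace_conjTranspose_mul_le _ _
    _ ≤ √(Aᴴ * A).trace.re * √(Bᴴ * B).trace.re := by
        rw [hAZ]
        exact mul_le_mul_of_nonneg_right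
          (Real.sqrt_le_sqrt (re_trace_conjTranspose_mul_self_mul_le hZ A)) (Real.sqrt_nonneg _)

theorem traceNorm_sum_smul_vecMulVec_le [DecidableEq p] [DecidableEq q] (w : k → ℝ)
    (hw : ∀ i, 0 ≤ w i) (u : k → p → ℂ) (v : k → q → ℂ) :
    traceNorm (∑ i, (w i : ℂ) • vecMulVec (u i) (v i)) ≤
      √(∑ i, w i * ∑ x, ‖u i x‖ ^ 2) * √(∑ i, w i * ∑ y, ‖v i y‖ ^ 2) := by
  set A : Matrix k p ℂ := of fun i x => (√(w i) : ℂ) * star (u i x)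
  set B : Matrix k q ℂ := of fun i y => (√(w i) : ℂ) * v i y
  have hAB : ∑ i, (w i : ℂ) • vecMulVec (u i) (v i) = Aᴴ * B := by
    ext x y
    simp only [sum_apply, smul_apply, vecMulVec_apply, mul_apply, conjTranspose_apply, A, B,
      of_apply, star_mul', Complex.star_def, Complex.conj_conj, Complex.conj_ofReal, smul_eq_mul]
    refine Finset.sum_congr rfl fun i _ => ?_
    have hw' : (√(w i) : ℂ) * √(w i) = w i := mod_cast Real.mul_self_sqrt (hw i)
    linear_combination -(u i x * v i y) * hw'
  have hA : (Aᴴ * A).trace.re = ∑ i, w i * ∑ x, ‖u i x‖ ^ 2 := by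
    simp only [re_trace_conjTranspose_mul_self, A, of_apply, norm_mul, norm_star, mul_pow,
      Finset.mul_sum, Complex.norm_real, Real.norm_eq_abs, sq_abs, Real.sq_sqrt (hw _)]
  have hB : (Bᴴ * B).trace.re = ∑ i, w i * ∑ y, ‖v i y‖ ^ 2 := by
    simp only [re_trace_conjTranspose_mul_self, B, of_apply, norm_mul, mul_pow,
      Finset.mul_sum, Complex.norm_real, Real.norm_eq_abs, sq_abs, Real.sq_sqrt (hw _)]
  rw [hAB, ← hA, ← hB]
  exact traceNorm_conjTranspose_mul_le A B

end Matrix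

theorem IsDensityMatrix.re_trace_mul_self_le_one {n : Type*} [Fintype n] [DecidableEq n]
    {ρ : Matrix n n ℂ} (hρ : IsDensityMatrix ρ) : (ρ * ρ).trace.re ≤ 1 := by
  obtain ⟨hpos, htr⟩ := hρ
  set ev := hpos.1.eigenvalues
  have hsum : ∑ i, ev i = 1 := by
    have := congrArg Complex.re (hpos.1.trace_eq_sum_eigenvalues)
    simpa [htr] using this.symm
  have hsq : (ρ * ρ).trace.re = ∑ i, ev i ^ 2 := by
    rw [hpos.1.spectral_theorem, ← map_mul, Matrix.trace_conjStarAlgAut, diagonal_mul_diagonal,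
      trace_diagonal]
    simp [ev, pow_two]
  rw [hsq, ← one_pow 2, ← hsum]
  exact Finset.sum_sq_le_sq_sum_of_nonneg fun i _ => hpos.eigenvalues_nonneg i

noncomputable def gsicOverlap (d : ℕ) (a : ℝ) : ℝ := (1 - d * a) / (d * (d ^ 2 - 1))

namespace IsGSICPOVM

variable {d : ℕ} {a : ℝ} {M : Fin (d ^ 2) → Matrix (Fin d) (Fin d) ℂ}

theorem two_le (hM : IsGSICPOVM d a M) : 2 ≤ d := by
  obtain ⟨-, -, -, -, hlow, hupp⟩ := hM
  by_contra! h
  interval_cases d <;> norm_num at hlow hupp <;> linarith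

theorem gsicOverlap_lt (hM : IsGSICPOVM d a M) : gsicOverlap d a < a := by
  have hd : (2 : ℝ) ≤ d := mod_cast hM.two_le
  have hlow : 1 < a * d ^ 3 := by
    have := hM.2.2.2.2.1
    rwa [div_lt_iff₀ (by positivity)] at this
  rw [gsicOverlap, div_lt_iff₀ (by nlinarith)]
  nlinarith

theorem sub_gsicOverlap_add_mul (hM : IsGSICPOVM d a M) :
    ((a : ℂ) - gsicOverlap d a) + gsicOverlap d a * (d : ℂ) ^ 2 = (d : ℂ)⁻¹ := by
  have hd : (2 : ℝ) ≤ d := mod_cast hM.two_le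
  have hd2 : (d : ℝ) ^ 2 - 1 ≠ 0 := by nlinarith
  have h : a - gsicOverlap d a + gsicOverlap d a * d ^ 2 = (d : ℝ)⁻¹ := by
    rw [gsicOverlap]
    field_simp
    ring
  have h' := congrArg ((↑) : ℝ → ℂ) h
  push_cast at h'
  exact h'

theorem trace_mul_sum_smul (hM : IsGSICPOVM d a M) (r : Fin (d ^ 2) → ℂ) (β : Fin (d ^ 2)) :
    (M β * ∑ α, r α • M α).trace =
      ((a : ℂ) - gsicOverlap d a) * r β + (gsicOverlap d a : ℂ) * ∑ α, r α := by
  simp only [Matrix.mul_sum, Matrix.mul_smul, Matrix.trace_sum, Matrix.trace_smul, smul_eq_mul]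
  rw [← Finset.add_sum_erase _ _ (Finset.mem_univ β), hM.2.2.1 β,
    Finset.sum_congr rfl fun α hα => by rw [hM.2.2.2.1 β α (Finset.ne_of_mem_erase hα).symm],
    ← Finset.sum_mul, Finset.sum_erase_eq_sub (Finset.mem_univ β)]
  push_cast [gsicOverlap]
  ring

theorem trace_eq (hM : IsGSICPOVM d a M) (α : Fin (d ^ 2)) : (M α).trace = (d : ℂ)⁻¹ := by
  have h := hM.trace_mul_sum_smul 1 α
  simp only [Pi.one_apply, one_smul, hM.2.1, Finset.sum_const, Finset.card_univ,
    Fintype.card_fin, nsmul_eq_mul, mul_one] at h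
  push_cast at h
  linear_combination h + hM.sub_gsicOverlap_add_mul

theorem linearIndependent (hM : IsGSICPOVM d a M) : LinearIndependent ℂ M := by
  have hd : (d : ℂ)⁻¹ ≠ 0 := inv_ne_zero (mod_cast (zero_lt_two.trans_le hM.two_le).ne')
  have hgap : ((a : ℂ) - gsicOverlap d a) ≠ 0 := mod_cast (sub_pos.2 hM.gsicOverlap_lt).ne'
  rw [Fintype.linearIndependent_iff]
  intro r hr
  have hβ (β : Fin (d ^ 2)) :
      ((a : ℂ) - gsicOverlap d a) * r β + (gsicOverlap d a : ℂ) * ∑ α, r α = 0 := by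
    rw [← hM.trace_mul_sum_smul, hr, Matrix.mul_zero, Matrix.trace_zero]
  have hsum : ∑ α, r α = 0 := by
    have h := Finset.sum_eq_zero (s := Finset.univ) fun β _ => hβ β
    rw [Finset.sum_add_distrib, ← Finset.mul_sum, Finset.sum_const, Finset.card_univ,
      Fintype.card_fin, nsmul_eq_mul] at h
    push_cast at h
    have : (d : ℂ)⁻¹ * ∑ α, r α = 0 := by
      linear_combination h - (∑ α, r α) * hM.sub_gsicOverlap_add_mul
    exact (mul_eq_zero.1 this).resolve_left hd
  intro β
  have h := hβ β
  rw [hsum, mul_zero, add_zero] at h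
  exact (mul_eq_zero.1 h).resolve_left hgap

theorem exists_eq_sum_smul (hM : IsGSICPOVM d a M) (X : Matrix (Fin d) (Fin d) ℂ) :
    ∃ r : Fin (d ^ 2) → ℂ, ∑ α, r α • M α = X := by
  have hcard : Fintype.card (Fin (d ^ 2)) = Module.finrank ℂ (Matrix (Fin d) (Fin d) ℂ) := by
    simp [Module.finrank_matrix, sq]
  rw [← Submodule.mem_span_range_iff_exists_fun,
    hM.linearIndependent.span_eq_top_of_card_eq_finrank' hcard]
  exact Submodule.mem_top

theorem sum_trace_mul_sq (hM : IsGSICPOVM d a M) (X : Matrix (Fin d) (Fin d) ℂ) :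
    ∑ β, (M β * X).trace ^ 2 = ((a : ℂ) - gsicOverlap d a) * (X * X).trace +
      (gsicOverlap d a : ℂ) * d * X.trace ^ 2 := by
  obtain ⟨r, rfl⟩ := hM.exists_eq_sum_smul X
  set c : ℂ := (gsicOverlap d a : ℂ)
  set s := ∑ α, r α
  have hd : (d : ℂ) * (d : ℂ)⁻¹ = 1 :=
    mul_inv_cancel₀ (mod_cast (zero_lt_two.trans_le hM.two_le).ne')
  have htr : (∑ α, r α • M α).trace = s * (d : ℂ)⁻¹ := by
    simp only [Matrix.trace_sum, Matrix.trace_smul, hM.trace_eq, smul_eq_mul, s, Finset.sum_mul]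
  have hsq : ((∑ α, r α • M α) * ∑ α, r α • M α).trace =
      ((a : ℂ) - gsicOverlap d a) * ∑ α, r α ^ 2 + c * s ^ 2 := by
    calc ((∑ α, r α • M α) * ∑ α, r α • M α).trace
        = ∑ α, r α * (M α * ∑ α, r α • M α).trace := by
          simp only [Matrix.sum_mul, Matrix.smul_mul, Matrix.trace_sum, Matrix.trace_smul,
            smul_eq_mul]
      _ = ∑ α, (((a : ℂ) - gsicOverlap d a) * r α ^ 2 + c * s * r α) :=
          Finset.sum_congr rfl fun α _ => by rw [hM.trace_mul_sum_smul]; ring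
      _ = ((a : ℂ) - gsicOverlap d a) * ∑ α, r α ^ 2 + c * s ^ 2 := by
          rw [Finset.sum_add_distrib, ← Finset.mul_sum, ← Finset.mul_sum]; ring
  simp only [hM.trace_mul_sum_smul, add_sq, Finset.sum_add_distrib, mul_pow, ← Finset.mul_sum,
    ← Finset.sum_mul, Finset.sum_const, Finset.card_univ, Fintype.card_fin, nsmul_eq_mul, htr,
    hsq]
  push_cast
  linear_combination (c * s ^ 2) * hM.sub_gsicOverlap_add_mul -
    (c * s ^ 2 * (d : ℂ)⁻¹) * hd

theorem sum_norm_trace_mul_sq_le (hM : IsGSICPOVM d a M) {ρ : Matrix (Fin d) (Fin d) ℂ}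
    (hρ : IsDensityMatrix ρ) :
    ∑ α, ‖(M α * ρ).trace‖ ^ 2 ≤ (a * d ^ 2 + 1) / (d * (d + 1)) := by
  have hnorm (α : Fin (d ^ 2)) : ((‖(M α * ρ).trace‖ ^ 2 : ℝ) : ℂ) = (M α * ρ).trace ^ 2 := by
    have hreal := Complex.conj_eq_iff_re.1 (((hM.1 α).1.star_trace_mul hρ.1.1))
    rw [← hreal, Complex.norm_real, Real.norm_eq_abs, sq_abs, Complex.ofReal_pow]
  have hpur : ((ρ * ρ).trace.re : ℂ) = (ρ * ρ).trace :=
    Complex.conj_eq_iff_re.1 (hρ.1.1.star_trace_mul hρ.1.1)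
  have hsum : ∑ α, ‖(M α * ρ).trace‖ ^ 2 =
      (a - gsicOverlap d a) * (ρ * ρ).trace.re + gsicOverlap d a * d := by
    have h := hM.sum_trace_mul_sq ρ
    rw [hρ.2, one_pow, mul_one, ← hpur] at h
    simp only [← hnorm] at h
    exact_mod_cast h
  have hd : (2 : ℝ) ≤ d := mod_cast hM.two_le
  calc ∑ α, ‖(M α * ρ).trace‖ ^ 2
      ≤ (a - gsicOverlap d a) * 1 + gsicOverlap d a * d := by
        rw [hsum]
        gcongr
        · exact (sub_pos.2 hM.gsicOverlap_lt).le
        · exact hρ.re_trace_mul_self_le_one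
    _ = (a * d ^ 2 + 1) / (d * (d + 1)) := by
        have hd2 : (d : ℝ) ^ 2 - 1 ≠ 0 := by nlinarith
        rw [gsicOverlap]
        field_simp
        ring

end IsGSICPOVM

section Bipartite

variable {dA dB : ℕ} {ι : Type*} [Fintype ι]

theorem ptraceA_sum_smul_kronecker (c : ι → ℂ) (ρA : ι → Matrix (Fin dA) (Fin dA) ℂ)
    (ρB : ι → Matrix (Fin dB) (Fin dB) ℂ) :
    ptraceA (∑ i, c i • (ρA i ⊗ₖ ρB i)) = ∑ i, (c i * (ρA i).trace) • ρB i := by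
  ext j l
  simp only [ptraceA, of_apply, Matrix.sum_apply, Matrix.smul_apply, kroneckerMap_apply, trace,
    diag, smul_eq_mul, Finset.mul_sum, Finset.sum_mul]
  rw [Finset.sum_comm]
  simp only [mul_assoc]

theorem ptraceB_sum_smul_kronecker (c : ι → ℂ) (ρA : ι → Matrix (Fin dA) (Fin dA) ℂ)
    (ρB : ι → Matrix (Fin dB) (Fin dB) ℂ) :
    ptraceB (∑ i, c i • (ρA i ⊗ₖ ρB i)) = ∑ i, (c i * (ρB i).trace) • ρA i := by
  ext j l
  simp only [ptraceB, of_apply, Matrix.sum_apply, Matrix.smul_apply, kroneckerMap_apply, trace,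
    diag, smul_eq_mul, Finset.mul_sum, Finset.sum_mul]
  rw [Finset.sum_comm]
  refine Finset.sum_congr rfl fun _ _ => Finset.sum_congr rfl fun _ _ => by ring

variable {m n : ℕ} {κA κB : Type*}

/-- The matrix `Q_{a,b}(ρ)` of the paper. -/
noncomputable def correlationMatrix (a : Fin m → ℝ) (b : Fin n → ℝ)
    (MA : κA → Matrix (Fin dA) (Fin dA) ℂ) (MB : κB → Matrix (Fin dB) (Fin dB) ℂ)
    (ρ : Matrix (Fin dA × Fin dB) (Fin dA × Fin dB) ℂ) : Matrix (Fin m ⊕ κA) (Fin n ⊕ κB) ℂ :=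
  fromBlocks (of fun i j => (a i : ℂ) * (b j : ℂ))
    (of fun i β => (a i : ℂ) * (MB β * ptraceA ρ).trace)
    (of fun α j => (MA α * ptraceB ρ).trace * (b j : ℂ))
    (of fun α β => ((MA α ⊗ₖ MB β) * ρ).trace)

theorem correlationMatrix_sum_smul_kronecker (a : Fin m → ℝ) (b : Fin n → ℝ)
    (MA : κA → Matrix (Fin dA) (Fin dA) ℂ) (MB : κB → Matrix (Fin dB) (Fin dB) ℂ)
    {p : ι → ℝ} (hp : ∑ i, p i = 1) {ρA : ι → Matrix (Fin dA) (Fin dA) ℂ}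
    {ρB : ι → Matrix (Fin dB) (Fin dB) ℂ} (hρA : ∀ i, (ρA i).trace = 1)
    (hρB : ∀ i, (ρB i).trace = 1) :
    correlationMatrix a b MA MB (∑ i, (p i : ℂ) • (ρA i ⊗ₖ ρB i)) =
      ∑ i, (p i : ℂ) • vecMulVec (Sum.elim (fun j => (a j : ℂ)) fun α => (MA α * ρA i).trace)
        (Sum.elim (fun j => (b j : ℂ)) fun β => (MB β * ρB i).trace) := by
  have hp' : ∑ i, (p i : ℂ) = 1 := mod_cast hp
  ext (j | α) (l | β) <;>
    simp only [correlationMatrix, fromBlocks_apply₁₁, fromBlocks_apply₁₂, fromBlocks_apply₂₁,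
      fromBlocks_apply₂₂, of_apply, Matrix.sum_apply, Matrix.smul_apply, vecMulVec_apply,
      Sum.elim_inl, Sum.elim_inr, smul_eq_mul, ptraceA_sum_smul_kronecker,
      ptraceB_sum_smul_kronecker, hρA, hρB, mul_one, Matrix.mul_sum, Matrix.mul_smul,
      Matrix.trace_sum, Matrix.trace_smul, ← mul_kronecker_mul, trace_kronecker]
  · rw [← Finset.sum_mul, hp', one_mul]
  · rw [Finset.mul_sum]
    exact Finset.sum_congr rfl fun _ _ => mul_left_comm _ _ _
  · rw [Finset.sum_mul]
    exact Finset.sum_congr rfl fun _ _ => mul_assoc _ _ _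

end Bipartite

theorem sum_mul_sum_norm_sq_sumElim_le {ι μ κ : Type*} [Fintype ι] [Fintype μ] [Fintype κ]
    {p : ι → ℝ} (hp : ∀ i, 0 ≤ p i) (hp1 : ∑ i, p i = 1) (c : μ → ℝ) (t : ι → κ → ℂ)
    {C : ℝ} (ht : ∀ i, ∑ α, ‖t i α‖ ^ 2 ≤ C) :
    ∑ i, p i * ∑ x, ‖Sum.elim (fun j => (c j : ℂ)) (t i) x‖ ^ 2 ≤ ∑ j, c j ^ 2 + C := by
  calc ∑ i, p i * ∑ x, ‖Sum.elim (fun j => (c j : ℂ)) (t i) x‖ ^ 2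
      ≤ ∑ i, p i * (∑ j, c j ^ 2 + C) := by
        refine Finset.sum_le_sum fun i _ => mul_le_mul_of_nonneg_left ?_ (hp i)
        simpa [Fintype.sum_sum_type] using ht i
    _ = ∑ j, c j ^ 2 + C := by rw [← Finset.sum_mul, hp1, one_mul]

theorem separability_criterion_GSIC_general
    (dA dB m n : ℕ) (aA aB : ℝ)
    (MA : Fin (dA ^ 2) → Matrix (Fin dA) (Fin dA) ℂ)
    (MB : Fin (dB ^ 2) → Matrix (Fin dB) (Fin dB) ℂ)
    (hMA : IsGSICPOVM dA aA MA) (hMB : IsGSICPOVM dB aB MB)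
    (a : Fin m → ℝ) (b : Fin n → ℝ)
    (ρ : Matrix (Fin dA × Fin dB) (Fin dA × Fin dB) ℂ)
    (hsep : SeparableState ρ) :
    traceNorm (Matrix.fromBlocks
      (Matrix.of fun (i : Fin m) (j : Fin n) => ((a i : ℂ) * (b j : ℂ)))
      (Matrix.of fun (i : Fin m) (β : Fin (dB ^ 2)) =>
        (a i : ℂ) * (MB β * ptraceA ρ).trace)
      (Matrix.of fun (α : Fin (dA ^ 2)) (j : Fin n) =>
        (MA α * ptraceB ρ).trace * (b j : ℂ))
      (Matrix.of fun (α : Fin (dA ^ 2)) (β : Fin (dB ^ 2)) =>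
        ((MA α ⊗ₖ MB β) * ρ).trace)) ≤
    Real.sqrt (
      (∑ i, a i ^ 2 + (aA * (dA : ℝ) ^ 2 + 1) / ((dA : ℝ) * ((dA : ℝ) + 1))) *
      (∑ j, b j ^ 2 + (aB * (dB : ℝ) ^ 2 + 1) / ((dB : ℝ) * ((dB : ℝ) + 1)))) := by
  obtain ⟨K, p, ρA, ρB, hp, hp1, hρA, hρB, rfl⟩ := hsep
  change traceNorm (correlationMatrix a b MA MB _) ≤ _
  rw [correlationMatrix_sum_smul_kronecker a b MA MB hp1 (fun i => (hρA i).2)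
    (fun i => (hρB i).2)]
  have hA := sum_mul_sum_norm_sq_sumElim_le hp hp1 a _ fun i =>
    hMA.sum_norm_trace_mul_sq_le (hρA i)
  have hB := sum_mul_sum_norm_sq_sumElim_le hp hp1 b _ fun i =>
    hMB.sum_norm_trace_mul_sq_le (hρB i)
  have hSA : (0 : ℝ) ≤ _ :=
    (Finset.sum_nonneg fun i _ => mul_nonneg (hp i) (by positivity)).trans hA
  calc _ ≤ _ := Matrix.traceNorm_sum_smul_vecMulVec_le p hp _ _
    _ ≤ _ := mul_le_mul (Real.sqrt_le_sqrt hA) (Real.sqrt_le_sqrt hB) (Real.sqrt_nonneg _)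
        (Real.sqrt_nonneg _)
    _ = _ := (Real.sqrt_mul hSA _).symm

/-- Corollary 1 of the paper: for a separable bipartite state
ρ_AB, arbitrary real vectors a, b, and GSIC-POVMs with parameters a_A, a_B on
the two subsystems,
‖Q_{a,b}(ρ_AB)‖_tr ≤ √((|a|² + (a_A d_A²+1)/(d_A(d_A+1)))·(|b|² + (a_B d_B²+1)/(d_B(d_B+1)))). -/
theorem separability_criterion_GSIC
    (dA dB m n : ℕ) (aA aB : ℝ)
    (MA : Fin (dA ^ 2) → Matrix (Fin dA) (Fin dA) ℂ)
    (MB : Fin (dB ^ 2) → Matrix (Fin dB) (Fin dB) ℂ)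
    (hMA : IsGSICPOVM dA aA MA) (hMB : IsGSICPOVM dB aB MB)
    (a : Fin m → ℝ) (b : Fin n → ℝ)
    (ρ : Matrix (Fin dA × Fin dB) (Fin dA × Fin dB) ℂ)
    (hρ : IsDensityMatrix ρ) (hsep : SeparableState ρ) :
    traceNorm (Matrix.fromBlocks
      (Matrix.of fun (i : Fin m) (j : Fin n) => ((a i : ℂ) * (b j : ℂ)))
      (Matrix.of fun (i : Fin m) (β : Fin (dB ^ 2)) =>
        (a i : ℂ) * (MB β * ptraceA ρ).trace)
      (Matrix.of fun (α : Fin (dA ^ 2)) (j : Fin n) =>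
        (MA α * ptraceB ρ).trace * (b j : ℂ))
      (Matrix.of fun (α : Fin (dA ^ 2)) (β : Fin (dB ^ 2)) =>
        ((MA α ⊗ₖ MB β) * ρ).trace)) ≤
    Real.sqrt (
      (∑ i, a i ^ 2 + (aA * (dA : ℝ) ^ 2 + 1) / ((dA : ℝ) * ((dA : ℝ) + 1))) *
      (∑ j, b j ^ 2 + (aB * (dB : ℝ) ^ 2 + 1) / ((dB : ℝ) * ((dB : ℝ) + 1)))) :=
  separability_criterion_GSIC_general dA dB m n aA aB MA MB hMA hMB a b ρ hsep
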